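/- arXiv:1707.05391 — 2 statements merged into one kernel-verified Lean document; each statement's English description precedes it below -/
import Mathlib

section
/- Let κ > 0 and ε ∈ (0, √(2/(eπ))], and set k = (√2/κ) · √(log(2/(π ε²))). Then the function f(x) = erf(kx) satisfies |f(x)| ≤ 1 for all real x, and |f(x) − sgn(x)| ≤ ε for all x with |x| ≥ κ/2. -/
/-!
Since `∫₀^∞ e^{-y²} = √π/2`, the function `erf` is odd with `erf x = 1 - (2/√π) ∫ₓ^∞ e^{-y²}`
for `x ≥ 0`, so `|erf| ≤ 1`. Bounding `e^{-y²} ≤ (y/t) e^{-y²}` on `(t, ∞)` gives the tail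
estimate `1 - erf x ≤ e^{-t²}/(√π t)` for `x ≥ t > 0`. At `t = kκ/2` one has `2t² = L`, where
`L = log (2/(π ε²)) ≥ 1`, so `e^{-t²} = ε √(π/2)` and the tail estimate equals `ε/√L ≤ ε`.
-/

open MeasureTheory

noncomputable def erf (x : ℝ) : ℝ :=
  2 / Real.sqrt Real.pi * ∫ y in (0:ℝ)..x, Real.exp (-(y ^ 2))

noncomputable def sgn (x : ℝ) : ℝ :=
  if 0 < x then 1 else if x < 0 then -1 else 1/2

open Real Set Filter

lemma integrable_exp_neg_sq : Integrable fun y : ℝ => exp (-(y ^ 2)) := by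
  simpa using integrable_exp_neg_mul_sq (b := 1) one_pos

lemma integral_Ioi_zero_exp_neg_sq : ∫ y in Ioi (0 : ℝ), exp (-(y ^ 2)) = √π / 2 := by
  simpa using integral_gaussian_Ioi 1

lemma integrable_mul_exp_neg_sq : Integrable fun y : ℝ => y * exp (-(y ^ 2)) := by
  simpa using integrable_mul_exp_neg_mul_sq (b := 1) one_pos

lemma integral_Ioi_mul_exp_neg_sq (t : ℝ) :
    ∫ y in Ioi t, y * exp (-(y ^ 2)) = exp (-(t ^ 2)) / 2 := by
  have hderiv : ∀ y ∈ Ioi t,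
      HasDerivAt (fun y : ℝ => -exp (-(y ^ 2)) / 2) (y * exp (-(y ^ 2))) y := fun y _ => by
    refine ((hasDerivAt_pow 2 y).fun_neg.exp.fun_neg.div_const 2).congr_deriv ?_
    simp only [Nat.cast_ofNat, pow_one, Nat.add_one_sub_one]
    ring
  have hlim : Tendsto (fun y : ℝ => -exp (-(y ^ 2)) / 2) atTop (nhds 0) := by
    simpa using ((tendsto_exp_atBot.comp
      (tendsto_neg_atTop_atBot.comp (tendsto_pow_atTop two_ne_zero))).neg.div_const 2)
  rw [integral_Ioi_of_hasDerivAt_of_tendsto (by fun_prop) hderiv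
    integrable_mul_exp_neg_sq.integrableOn hlim]
  ring

lemma integral_Ioi_exp_neg_sq_le {t : ℝ} (ht : 0 < t) :
    ∫ y in Ioi t, exp (-(y ^ 2)) ≤ exp (-(t ^ 2)) / (2 * t) := by
  calc ∫ y in Ioi t, exp (-(y ^ 2))
      ≤ ∫ y in Ioi t, t⁻¹ * (y * exp (-(y ^ 2))) := by
        refine setIntegral_mono_on integrable_exp_neg_sq.integrableOn
          (integrable_mul_exp_neg_sq.integrableOn.const_mul _) measurableSet_Ioi
          fun y (hy : t < y) => ?_
        rw [← mul_assoc, le_mul_iff_one_le_left (exp_pos _), ← div_eq_inv_mul,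
          one_le_div ht]
        exact hy.le
    _ = exp (-(t ^ 2)) / (2 * t) := by
        rw [integral_const_mul, integral_Ioi_mul_exp_neg_sq]
        field_simp

lemma erf_eq_one_sub_integral_Ioi {x : ℝ} (hx : 0 ≤ x) :
    erf x = 1 - 2 / √π * ∫ y in Ioi x, exp (-(y ^ 2)) := by
  have hsplit : ∫ y in Ioi (0 : ℝ), exp (-(y ^ 2))
      = (∫ y in Ioc 0 x, exp (-(y ^ 2))) + ∫ y in Ioi x, exp (-(y ^ 2)) := by
    rw [← setIntegral_union (Ioc_disjoint_Ioi le_rfl) measurableSet_Ioi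
      integrable_exp_neg_sq.integrableOn integrable_exp_neg_sq.integrableOn,
      Ioc_union_Ioi_eq_Ioi hx]
  rw [integral_Ioi_zero_exp_neg_sq] at hsplit
  have hπ : 0 < √π := sqrt_pos.mpr pi_pos
  rw [erf, intervalIntegral.integral_of_le hx, eq_sub_of_add_eq hsplit.symm]
  field_simp

lemma erf_neg (x : ℝ) : erf (-x) = -erf x := by
  have h := intervalIntegral.integral_comp_neg (a := 0) (b := x) fun y : ℝ => exp (-(y ^ 2))
  simp only [neg_sq, neg_zero] at h
  rw [erf, erf, intervalIntegral.integral_symm, ← h]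
  ring

lemma erf_nonneg {x : ℝ} (hx : 0 ≤ x) : 0 ≤ erf x :=
  mul_nonneg (by positivity) (intervalIntegral.integral_nonneg hx fun _ _ => (exp_pos _).le)

lemma erf_le_one (x : ℝ) : erf x ≤ 1 := by
  rcases le_total 0 x with hx | hx
  · rw [erf_eq_one_sub_integral_Ioi hx, sub_le_self_iff]
    positivity
  · have := erf_nonneg (neg_nonneg.mpr hx)
    rw [erf_neg] at this
    linarith

lemma abs_erf_le_one (x : ℝ) : |erf x| ≤ 1 := by
  refine abs_le.mpr ⟨?_, erf_le_one x⟩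
  have := erf_le_one (-x)
  rw [erf_neg] at this
  linarith

lemma abs_erf_sub_one_le {t x : ℝ} (ht : 0 < t) (htx : t ≤ x) :
    |erf x - 1| ≤ exp (-(t ^ 2)) / (√π * t) := by
  have hπ : 0 < √π := sqrt_pos.mpr pi_pos
  have htail : ∫ y in Ioi x, exp (-(y ^ 2)) ≤ exp (-(t ^ 2)) / (2 * t) :=
    (setIntegral_mono_set integrable_exp_neg_sq.integrableOn
      (.of_forall fun _ => (exp_pos _).le) (Ioi_subset_Ioi htx).eventuallyLE).trans
      (integral_Ioi_exp_neg_sq_le ht)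
  rw [abs_sub_comm, abs_of_nonneg (sub_nonneg.mpr (erf_le_one x)),
    erf_eq_one_sub_integral_Ioi (ht.le.trans htx), sub_sub_cancel]
  calc 2 / √π * ∫ y in Ioi x, exp (-(y ^ 2))
      ≤ 2 / √π * (exp (-(t ^ 2)) / (2 * t)) := by gcongr
    _ = exp (-(t ^ 2)) / (√π * t) := by field_simp

lemma abs_erf_mul_sub_sgn (k : ℝ) {x : ℝ} (hx : x ≠ 0) :
    |erf (k * x) - sgn x| = |erf (k * |x|) - 1| := by
  rcases hx.lt_or_gt with hx | hx
  · rw [sgn, if_neg hx.not_gt, if_pos hx, abs_of_neg hx, mul_neg, erf_neg, ← abs_neg]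
    ring_nf
  · rw [sgn, if_pos hx, abs_of_pos hx]

lemma one_le_log_two_div_pi_mul_sq {ε : ℝ} (hε0 : 0 < ε) (hε : ε ≤ √(2 / (exp 1 * π))) :
    1 ≤ log (2 / (π * ε ^ 2)) := by
  have hε2 : ε ^ 2 ≤ 2 / (exp 1 * π) := (le_sqrt' hε0).mp hε
  rw [le_log_iff_exp_le (by positivity), le_div_iff₀ (by positivity)]
  rw [le_div_iff₀ (by positivity)] at hε2
  linarith

lemma exp_neg_sq_div_le {ε t : ℝ} (hε0 : 0 < ε) (hε : ε ≤ √(2 / (exp 1 * π))) (ht : 0 < t)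
    (ht2 : 2 * t ^ 2 = log (2 / (π * ε ^ 2))) :
    exp (-(t ^ 2)) / (√π * t) ≤ ε := by
  have hL := one_le_log_two_div_pi_mul_sq hε0 hε
  have hexp : exp (-(t ^ 2)) ^ 2 = π * ε ^ 2 / 2 := by
    rw [sq, ← exp_add, show -(t ^ 2) + -(t ^ 2) = -(2 * t ^ 2) by ring, ht2,
      exp_neg, exp_log (by positivity), inv_div]
  have hπ : 0 < √π := sqrt_pos.mpr pi_pos
  rw [div_le_iff₀ (by positivity), ← pow_le_pow_iff_left₀ (by positivity) (by positivity)
    two_ne_zero, hexp, mul_pow, mul_pow, sq_sqrt pi_pos.le]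
  nlinarith [pi_pos, sq_nonneg ε]

/-- Entire approximation to the sign function: for `κ > 0`, `ε ∈ (0, √(2/(eπ))]` and
`k = (√2/κ)·√(log(2/(π ε²)))`, the function `f x = erf (k x)` is bounded by `1` in absolute
value and satisfies `|f x − sgn x| ≤ ε` whenever `|x| ≥ κ/2`. -/
theorem erf_approx_sgn (κ ε k : ℝ) (hκ : 0 < κ) (hε0 : 0 < ε)
    (hε : ε ≤ Real.sqrt (2 / (Real.exp 1 * Real.pi)))
    (hk : k = Real.sqrt 2 / κ * Real.sqrt (Real.log (2 / (Real.pi * ε ^ 2)))) :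
    (∀ x : ℝ, |erf (k * x)| ≤ 1) ∧
      ∀ x : ℝ, κ / 2 ≤ |x| → |erf (k * x) - sgn x| ≤ ε := by
  have hL := one_le_log_two_div_pi_mul_sq hε0 hε
  have hk0 : 0 < k := by rw [hk]; have := sqrt_pos.mpr (one_pos.trans_le hL); positivity
  have ht : 0 < k * (κ / 2) := by positivity
  have ht2 : 2 * (k * (κ / 2)) ^ 2 = log (2 / (π * ε ^ 2)) := by
    rw [hk, mul_pow, mul_pow, div_pow, sq_sqrt zero_le_two, sq_sqrt (by linarith)]
    field_simp
  refine ⟨fun x => abs_erf_le_one _, fun x hx => ?_⟩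
  rw [abs_erf_mul_sub_sgn k (abs_pos.mp ((half_pos hκ).trans_le hx))]
  exact (abs_erf_sub_one_le ht (by gcongr)).trans (exp_neg_sq_div_le hε0 hε ht ht2)
end

section
/- For any nonnegative integer s and integer n ≥ 0, the tail of the Chebyshev expansion of x^s satisfies 2^{1−s} Σ_{j=n+1,…,s; s−j even} C(s, (s−j)/2) ≤ 2 e^{−n²/(2s)} (for s ≥ 1). -/
open Finset Real

/-- Chernoff bound for binomial tails. -/
lemma chernoff_binom (s m : ℕ) (hs : 1 ≤ s) (hm : 2 * m ≤ s) :
    (∑ k ∈ Finset.range (m + 1), ((s.choose k : ℕ) : ℝ)) ≤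
      2 ^ s * Real.exp (-((s : ℝ) - 2 * m) ^ 2 / (2 * s)) := by
  have hs0 : (0 : ℝ) < s := by exact_mod_cast hs
  set t : ℝ := (s : ℝ) - 2 * m with ht_def
  have ht : 0 ≤ t := by
    have : (2 * m : ℝ) ≤ s := by exact_mod_cast hm
    linarith
  set L : ℝ := 2 * t / s with hL_def
  have hL : 0 ≤ L := by positivity
  -- Step 1: bound the partial sum by the full weighted sum
  have step1 : (∑ k ∈ Finset.range (m + 1), ((s.choose k : ℕ) : ℝ)) ≤
      ∑ k ∈ Finset.range (s + 1), ((s.choose k : ℕ) : ℝ) * Real.exp (L * (m - k)) := by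
    have h1 : (∑ k ∈ Finset.range (m + 1), ((s.choose k : ℕ) : ℝ)) ≤
        ∑ k ∈ Finset.range (m + 1), ((s.choose k : ℕ) : ℝ) * Real.exp (L * (m - k)) := by
      apply Finset.sum_le_sum
      intro k hk
      have hk' : k ≤ m := Nat.lt_succ_iff.mp (Finset.mem_range.mp hk)
      have hexp : (1 : ℝ) ≤ Real.exp (L * (m - k)) := by
        have h0 : (0 : ℝ) ≤ L * ((m : ℝ) - k) := by
          have : (k : ℝ) ≤ m := by exact_mod_cast hk'
          have : (0 : ℝ) ≤ (m : ℝ) - k := by linarith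
          positivity
        calc (1 : ℝ) = Real.exp 0 := Real.exp_zero.symm
          _ ≤ _ := Real.exp_le_exp.mpr h0
      have hnn : (0 : ℝ) ≤ ((s.choose k : ℕ) : ℝ) := Nat.cast_nonneg _
      nlinarith [hnn, hexp]
    refine h1.trans ?_
    apply Finset.sum_le_sum_of_subset_of_nonneg
    · exact Finset.range_subset_range.mpr (by omega)
    · intro k _ _
      positivity
  -- Step 2: compute the full weighted sum
  have step2 : (∑ k ∈ Finset.range (s + 1), ((s.choose k : ℕ) : ℝ) * Real.exp (L * (m - k))) =
      Real.exp (L * m) * (Real.exp (-L) + 1) ^ s := by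
    rw [add_pow, Finset.mul_sum]
    apply Finset.sum_congr rfl
    intro k hk
    rw [one_pow, ← Real.exp_nat_mul,
      show L * ((m : ℝ) - k) = L * m + (k : ℝ) * (-L) by ring, Real.exp_add]
    ring
  -- Step 3: cosh bound
  have step3 : (Real.exp (-L) + 1) ^ s ≤
      Real.exp (-L * s / 2) * 2 ^ s * Real.exp (s * L ^ 2 / 8) := by
    have hcosh : Real.exp (-L) + 1 = Real.exp (-(L / 2)) * (2 * Real.cosh (L / 2)) := by
      rw [Real.cosh_eq]
      have h1 : Real.exp (-(L/2)) * Real.exp (L/2) = 1 := by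
        rw [← Real.exp_add]; simp
      have h2 : Real.exp (-(L/2)) * Real.exp (-(L/2)) = Real.exp (-L) := by
        rw [← Real.exp_add]; ring_nf
      nlinarith [h1, h2]
    rw [hcosh, mul_pow, mul_pow, ← Real.exp_nat_mul]
    have hc : Real.cosh (L / 2) ^ s ≤ Real.exp (s * L ^ 2 / 8) := by
      have h1 : Real.cosh (L / 2) ≤ Real.exp ((L / 2) ^ 2 / 2) :=
        Real.cosh_le_exp_half_sq (L / 2)
      calc Real.cosh (L / 2) ^ s ≤ (Real.exp ((L / 2) ^ 2 / 2)) ^ s := by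
            apply pow_le_pow_left₀ (by positivity) h1
        _ = Real.exp (s * L ^ 2 / 8) := by
            rw [← Real.exp_nat_mul]; ring_nf
    calc Real.exp ((s : ℝ) * -(L / 2)) * (2 ^ s * Real.cosh (L / 2) ^ s)
        ≤ Real.exp ((s : ℝ) * -(L / 2)) * (2 ^ s * Real.exp (s * L ^ 2 / 8)) := by
          apply mul_le_mul_of_nonneg_left _ (by positivity)
          apply mul_le_mul_of_nonneg_left hc (by positivity)
      _ = Real.exp (-L * s / 2) * 2 ^ s * Real.exp (s * L ^ 2 / 8) := by
          rw [show (s : ℝ) * -(L / 2) = -L * s / 2 by ring]; ring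
  -- combine
  have key : Real.exp (L * m) * (Real.exp (-L * s / 2) * 2 ^ s * Real.exp (s * L ^ 2 / 8)) =
      2 ^ s * Real.exp (-t ^ 2 / (2 * s)) := by
    rw [show Real.exp (L * m) * (Real.exp (-L * s / 2) * 2 ^ s * Real.exp (s * L ^ 2 / 8)) =
        2 ^ s * (Real.exp (L * m) * Real.exp (-L * s / 2) * Real.exp (s * L ^ 2 / 8)) by ring,
      ← Real.exp_add, ← Real.exp_add]
    congr 1
    rw [hL_def, ht_def]
    have h2m : (2 : ℝ) * m ≤ s := by exact_mod_cast hm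
    field_simp
    ring
  calc (∑ k ∈ Finset.range (m + 1), ((s.choose k : ℕ) : ℝ))
      ≤ ∑ k ∈ Finset.range (s + 1), ((s.choose k : ℕ) : ℝ) * Real.exp (L * (m - k)) := step1
    _ = Real.exp (L * m) * (Real.exp (-L) + 1) ^ s := step2
    _ ≤ Real.exp (L * m) * (Real.exp (-L * s / 2) * 2 ^ s * Real.exp (s * L ^ 2 / 8)) := by
        apply mul_le_mul_of_nonneg_left step3 (by positivity)
    _ = 2 ^ s * Real.exp (-t ^ 2 / (2 * s)) := key

/-- Chernoff-type bound on the tail of the Chebyshev expansion of `x^s`: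
for `s ≥ 1` and `n ≥ 0`, `2^{1−s} Σ_{j=n+1..s, s−j even} C(s,(s−j)/2) ≤ 2 e^{−n²/(2s)}`. -/
theorem monomial_chebyshev_tail_bound (s n : ℕ) (hs : 1 ≤ s) :
    (2 : ℝ) ^ ((1 : ℤ) - (s : ℤ)) *
        ∑ j ∈ (Finset.Icc (n + 1) s).filter (fun j => (s - j) % 2 = 0),
          ((s.choose ((s - j) / 2) : ℕ) : ℝ) ≤
      2 * Real.exp (-(n : ℝ) ^ 2 / (2 * s)) := by
  by_cases hns : n + 1 ≤ s
  · -- reindex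
    set m := (s - n - 1) / 2 with hm_def
    have hsum : (∑ j ∈ (Finset.Icc (n + 1) s).filter (fun j => (s - j) % 2 = 0),
          ((s.choose ((s - j) / 2) : ℕ) : ℝ)) =
        ∑ k ∈ Finset.range (m + 1), ((s.choose k : ℕ) : ℝ) := by
      apply Finset.sum_nbij' (fun j => (s - j) / 2) (fun k => s - 2 * k)
      · intro j hj
        simp only [Finset.mem_filter, Finset.mem_Icc] at hj
        simp only [Finset.mem_range]
        omega
      · intro k hk
        simp only [Finset.mem_range] at hk
        simp only [Finset.mem_filter, Finset.mem_Icc]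
        omega
      · intro j hj
        simp only [Finset.mem_filter, Finset.mem_Icc] at hj
        omega
      · intro k hk
        simp only [Finset.mem_range] at hk
        omega
      · intro j _; rfl
    rw [hsum]
    have hm2 : 2 * m ≤ s := by omega
    have hcher := chernoff_binom s m hs hm2
    have hmono : Real.exp (-((s : ℝ) - 2 * m) ^ 2 / (2 * s)) ≤
        Real.exp (-(n : ℝ) ^ 2 / (2 * s)) := by
      apply Real.exp_le_exp.mpr
      have hs0 : (0 : ℝ) < s := by exact_mod_cast hs
      have ht : (n : ℝ) ≤ (s : ℝ) - 2 * m := by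
        have : n + 1 ≤ s - 2 * m := by omega
        have h2 : 2 * m ≤ s := hm2
        have := Nat.cast_le (α := ℝ).mpr this
        push_cast [Nat.cast_sub h2] at this ⊢
        linarith
      have hn0 : (0 : ℝ) ≤ n := Nat.cast_nonneg n
      have : (n : ℝ) ^ 2 ≤ ((s : ℝ) - 2 * m) ^ 2 := by nlinarith
      apply div_le_div_of_nonneg_right (by linarith) (by positivity) |>.trans_eq rfl
    have hbound : (∑ k ∈ Finset.range (m + 1), ((s.choose k : ℕ) : ℝ)) ≤
        2 ^ s * Real.exp (-(n : ℝ) ^ 2 / (2 * s)) := by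
      refine hcher.trans ?_
      apply mul_le_mul_of_nonneg_left hmono (by positivity)
    have h2pow : (2 : ℝ) ^ ((1 : ℤ) - (s : ℤ)) = 2 / 2 ^ s := by
      rw [zpow_sub₀ (by norm_num), zpow_one, zpow_natCast]
    rw [h2pow]
    rw [div_mul_eq_mul_div, div_le_iff₀ (by positivity)]
    calc 2 * (∑ k ∈ Finset.range (m + 1), ((s.choose k : ℕ) : ℝ))
        ≤ 2 * (2 ^ s * Real.exp (-(n : ℝ) ^ 2 / (2 * s))) := by linarith
      _ = 2 * Real.exp (-(n : ℝ) ^ 2 / (2 * s)) * 2 ^ s := by ring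
  · have : (Finset.Icc (n + 1) s).filter (fun j => (s - j) % 2 = 0) = ∅ := by
      apply Finset.filter_eq_empty_iff.mpr
      intro j hj
      simp only [Finset.mem_Icc] at hj
      omega
    rw [this, Finset.sum_empty, mul_zero]
    positivity
end
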